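/- Let N = mk + 1 be prime with m ≥ 2 and x a generator of Z_N^×. If X₀ = {x^{jm} : 0 ≤ j ≤ k-1} satisfies X₀ + X₀ = Z_N \ X₀ and X₀ + Xᵢ = Z_N \ {0} for all 1 ≤ i ≤ m-1 (where Xᵢ = x^i·X₀), then the partition X₀, ..., X_{m-1} of Z_N \ {0} satisfies: every Xᵢ is a sum-free cyclic basis, and Xᵢ + Xⱼ = Z_N \ {0} for all i ≠ j. -/

import Mathlib

open Pointwise

/-!
Multiplication by the unit `x ^ i` is an additive automorphism of `ZMod N` which carries `X₀` onto
`Xᵢ` and, more generally, `X_d` onto `X_{d+i}`. It therefore transports the two hypotheses on `X₀`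
to every class: `Xᵢ + Xᵢ = x ^ i • (X₀ + X₀)` is the complement of `Xᵢ`, which says exactly that
`Xᵢ` is a sum-free cyclic basis, and for `i < j` we get `Xᵢ + Xⱼ = x ^ i • (X₀ + X_{j-i}) = ZMod N \ {0}`.
The classes partition the nonzero residues because `x` has order `mk` and the exponents `jm + i`
(`j < k`, `i < m`) run through `0, …, mk - 1` exactly once.
-/

def cyclotomicClass {R : Type*} [Monoid R] (x : Rˣ) (m k i : ℕ) : Set R :=
  {a | ∃ j < k, a = (x : R) ^ (j * m + i)}

section Monoid

variable {R : Type*} [Monoid R] (x : Rˣ) (m k : ℕ)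

theorem cyclotomicClass_add_index (d i : ℕ) :
    cyclotomicClass x m k (d + i) = x ^ i • cyclotomicClass x m k d := by
  ext a
  simp only [cyclotomicClass, Set.mem_smul_set, Set.mem_ofPred_eq, Units.smul_def,
    Units.val_pow_eq_pow_val, smul_eq_mul]
  constructor
  · rintro ⟨j, hj, rfl⟩
    exact ⟨_, ⟨j, hj, rfl⟩, by rw [← pow_add]; ring_nf⟩
  · rintro ⟨_, ⟨j, hj, rfl⟩, rfl⟩
    exact ⟨j, hj, by rw [← pow_add]; ring_nf⟩

theorem cyclotomicClass_eq_smul (i : ℕ) :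
    cyclotomicClass x m k i = x ^ i • cyclotomicClass x m k 0 := by
  simpa using cyclotomicClass_add_index x m k 0 i

variable {m k}

theorem mul_add_lt_mul_of_lt {i j : ℕ} (hj : j < k) (hi : i < m) : j * m + i < m * k := by
  nlinarith

theorem cyclotomicClass_disjoint (hx : m * k ≤ orderOf x) {i j : ℕ} (hi : i < m) (hj : j < m)
    (hij : i ≠ j) : Disjoint (cyclotomicClass x m k i) (cyclotomicClass x m k j) := by
  refine Set.disjoint_left.mpr ?_
  rintro _ ⟨a, ha, rfl⟩ ⟨b, hb, hab⟩
  have hexp : a * m + i = b * m + j := by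
    refine pow_injOn_Iio_orderOf (x := x) ?_ ?_ (Units.ext (by simpa using hab))
    · exact (mul_add_lt_mul_of_lt ha hi).trans_le hx
    · exact (mul_add_lt_mul_of_lt hb hj).trans_le hx
  apply hij
  simpa [Nat.add_comm, Nat.add_mul_mod_self_right, Nat.mod_eq_of_lt hi, Nat.mod_eq_of_lt hj]
    using congrArg (· % m) hexp

theorem exists_pow_mem_cyclotomicClass (hxk : x ^ (m * k) = 1) (hmk : 0 < m * k) (n : ℕ) :
    ∃ i < m, ((x ^ n : Rˣ) : R) ∈ cyclotomicClass x m k i := by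
  have hm : 0 < m := Nat.pos_of_mul_pos_right hmk
  set r := n % (m * k)
  have hr : x ^ n = x ^ r := by
    conv_lhs => rw [← Nat.div_add_mod n (m * k), pow_add, pow_mul, hxk, one_pow, one_mul]
  refine ⟨r % m, Nat.mod_lt _ hm, r / m, ?_, ?_⟩
  · rw [Nat.div_lt_iff_lt_mul hm, Nat.mul_comm k]
    exact Nat.mod_lt n hmk
  · rw [hr, Units.val_pow_eq_pow_val, Nat.div_add_mod']

end Monoid

theorem biUnion_cyclotomicClass {R : Type*} [GroupWithZero R] (x : Rˣ) {m k : ℕ}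
    (hxk : x ^ (m * k) = 1) (hmk : 0 < m * k) (hx : ∀ u : Rˣ, u ∈ Subgroup.zpowers x) :
    ⋃ i ∈ Finset.range m, cyclotomicClass x m k i = Set.univ \ {0} := by
  ext a
  simp only [Set.mem_iUnion, Finset.mem_range, Set.mem_sdiff, Set.mem_univ, Set.mem_singleton_iff,
    true_and, exists_prop]
  constructor
  · rintro ⟨i, -, j, -, rfl⟩
    exact pow_ne_zero _ x.ne_zero
  · intro ha
    have hfin : IsOfFinOrder x := isOfFinOrder_iff_pow_eq_one.mpr ⟨_, hmk, hxk⟩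
    obtain ⟨n, hn⟩ := hfin.mem_powers_iff_mem_zpowers.mpr (hx (Units.mk0 a ha))
    simpa [hn] using exists_pow_mem_cyclotomicClass x hxk hmk n

section Semiring

variable {R : Type*} [Semiring R] (x : Rˣ) (m k : ℕ)

theorem cyclotomicClass_add_self (h0 : cyclotomicClass x m k 0 + cyclotomicClass x m k 0 =
      Set.univ \ cyclotomicClass x m k 0) (i : ℕ) :
    cyclotomicClass x m k i + cyclotomicClass x m k i = Set.univ \ cyclotomicClass x m k i := by
  rw [cyclotomicClass_eq_smul x m k i, ← smul_add, h0, Set.smul_set_sdiff, Set.smul_set_univ]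

theorem cyclotomicClass_add_cyclotomicClass_add_index {d : ℕ}
    (hd : cyclotomicClass x m k 0 + cyclotomicClass x m k d = Set.univ \ {0}) (i : ℕ) :
    cyclotomicClass x m k i + cyclotomicClass x m k (d + i) = Set.univ \ {0} := by
  rw [cyclotomicClass_eq_smul x m k i, cyclotomicClass_add_index, ← smul_add, hd,
    Set.smul_set_sdiff, Set.smul_set_univ, Set.smul_set_singleton, smul_zero]

theorem cyclotomicClass_add_of_ne
    (h : ∀ d, 1 ≤ d → d ≤ m - 1 → cyclotomicClass x m k 0 + cyclotomicClass x m k d =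
      Set.univ \ {0})
    {i j : ℕ} (hi : i < m) (hj : j < m) (hij : i ≠ j) :
    cyclotomicClass x m k i + cyclotomicClass x m k j = Set.univ \ {0} := by
  wlog hlt : i < j generalizing i j
  · rw [add_comm]
    exact this hj hi hij.symm (by omega)
  have hd := cyclotomicClass_add_cyclotomicClass_add_index x m k (h (j - i) (by omega) (by omega)) i
  rwa [Nat.sub_add_cancel hlt.le] at hd

end Semiring

theorem single_generator_SSFCMB_general (m k : ℕ)
    (hN : Nat.Prime (m * k + 1)) (x : (ZMod (m * k + 1))ˣ)
    (hx : ∀ u : (ZMod (m * k + 1))ˣ, u ∈ Subgroup.zpowers x) :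
    let X : ℕ → Set (ZMod (m * k + 1)) :=
      fun i => {a : ZMod (m * k + 1) | ∃ j < k, a = (x : ZMod (m * k + 1)) ^ (j * m + i)}
    (X 0 + X 0 = Set.univ \ X 0) →
    (∀ i, 1 ≤ i → i ≤ m - 1 → X 0 + X i = Set.univ \ {0}) →
      (∀ i j, i < m → j < m → i ≠ j → X i ∩ X j = ∅) ∧
      (⋃ i ∈ Finset.range m, X i) = Set.univ \ {0} ∧
      (∀ i, i < m → (X i + X i) ∩ X i = ∅) ∧
      (∀ i, i < m → (X i + X i) ∪ X i = Set.univ) ∧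
      (∀ i j, i < m → j < m → i ≠ j → X i + X j = Set.univ \ {0}) := by
  intro X h0 hcross
  have : Fact (m * k + 1).Prime := ⟨hN⟩
  have hord : orderOf x = m * k := by
    rw [orderOf_eq_card_of_forall_mem_zpowers hx, Nat.card_eq_fintype_card, ZMod.card_units,
      Nat.add_sub_cancel]
  have hmk : 0 < m * k := by have := hN.two_le; omega
  have hself := cyclotomicClass_add_self x m k h0
  refine ⟨fun i j hi hj hij => (cyclotomicClass_disjoint x hord.ge hi hj hij).inter_eq,
    biUnion_cyclotomicClass x (orderOf_dvd_iff_pow_eq_one.mp hord.dvd) hmk hx,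
    fun i _ => ?_, fun i _ => ?_,
    fun i j hi hj hij => cyclotomicClass_add_of_ne x m k hcross hi hj hij⟩
  · rw [show X i = cyclotomicClass x m k i from rfl, hself i, Set.sdiff_inter_self]
  · rw [show X i = cyclotomicClass x m k i from rfl, hself i, Set.sdiff_union_self, Set.univ_union]

theorem single_generator_SSFCMB (m k : ℕ) (hm : 2 ≤ m) (hk : 0 < k)
    (hN : Nat.Prime (m * k + 1)) (x : (ZMod (m * k + 1))ˣ)
    (hx : ∀ u : (ZMod (m * k + 1))ˣ, u ∈ Subgroup.zpowers x) :
    let X : ℕ → Set (ZMod (m * k + 1)) :=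
      fun i => {a : ZMod (m * k + 1) | ∃ j < k, a = (x : ZMod (m * k + 1)) ^ (j * m + i)}
    (X 0 + X 0 = Set.univ \ X 0) →
    (∀ i, 1 ≤ i → i ≤ m - 1 → X 0 + X i = Set.univ \ {0}) →
      (∀ i j, i < m → j < m → i ≠ j → X i ∩ X j = ∅) ∧
      (⋃ i ∈ Finset.range m, X i) = Set.univ \ {0} ∧
      (∀ i, i < m → (X i + X i) ∩ X i = ∅) ∧
      (∀ i, i < m → (X i + X i) ∪ X i = Set.univ) ∧
      (∀ i j, i < m → j < m → i ≠ j → X i + X j = Set.univ \ {0}) :=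
  single_generator_SSFCMB_general m k hN x hx
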